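/- Closure under modus ponens of the staged valuation: with τ defined from the staged reduction process (τ(A_i)=0 if some iterate A_i^k = ⊥, τ(A_i)=1 if some iterate A_i^k = ⊤ or if no iterate ever reduces to ⊤ or ⊥), if τ(A) = 1 and τ(A → B) = 1 then τ(B) = 1. -/
import Mathlib


/-- Propositional formulas over atoms {⊤, ⊥} ∪ {variables}. -/
inductive Fm2 : Type
  | var : ℕ → Fm2
  | top : Fm2
  | bot : Fm2
  | and : Fm2 → Fm2 → Fm2
  | or : Fm2 → Fm2 → Fm2
  | imp : Fm2 → Fm2 → Fm2
deriving DecidableEq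

/-- `A` contains no occurrence of ⊤ or ⊥. -/
def Fm2.noConst : Fm2 → Bool
  | .var _ => true
  | .top => false
  | .bot => false
  | .and a b => a.noConst && b.noConst
  | .or a b => a.noConst && b.noConst
  | .imp a b => a.noConst && b.noConst

/-- A formula is reduced if it is ⊤, ⊥, or contains no occurrence of ⊤ or ⊥. -/
def Fm2.Reduced (A : Fm2) : Prop := A = .top ∨ A = .bot ∨ A.noConst = true

/-- One-level reduction clause for ∧ (applied to already-reduced arguments). -/
def Fm2.rand : Fm2 → Fm2 → Fm2
  | .top, b => b
  | a, .top => a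
  | .bot, _ => .bot
  | _, .bot => .bot
  | a, b => .and a b

/-- One-level reduction clause for ∨. -/
def Fm2.ror : Fm2 → Fm2 → Fm2
  | .top, _ => .top
  | _, .top => .top
  | .bot, b => b
  | a, .bot => a
  | a, b => .or a b

/-- One-level reduction clause for →, with (A → ⊥)' = ⊥ only when A ≠ ⊥. -/
def Fm2.rimp : Fm2 → Fm2 → Fm2
  | .top, b => b
  | .bot, _ => .top
  | _, .top => .top
  | _, .bot => .bot
  | a, b => .imp a b

/-- The reduction of a formula: reduce subformulas, then apply the clauses. -/
def Fm2.reduce : Fm2 → Fm2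
  | .var n => .var n
  | .top => .top
  | .bot => .bot
  | .and a b => Fm2.rand a.reduce b.reduce
  | .or a b => Fm2.ror a.reduce b.reduce
  | .imp a b => Fm2.rimp a.reduce b.reduce

/-- Substitute ⊤ (resp. ⊥) for the variables decided true (resp. false). -/
def Fm2.subst (σ : ℕ → Option Bool) : Fm2 → Fm2
  | .var n =>
      match σ n with
      | some true => .top
      | some false => .bot
      | none => .var n
  | .top => .top
  | .bot => .bot
  | .and a b => .and (a.subst σ) (b.subst σ)
  | .or a b => .or (a.subst σ) (b.subst σ)
  | .imp a b => .imp (a.subst σ) (b.subst σ)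

/-- The staged iterates of the enumeration `A`: stage 0 reduces each `A i`;
at each later stage, substitute ⊤/⊥ for the variables decided at the previous
stage and reduce again.  `stage A k i` is the paper's `A_i^{k+1}`. -/
def stage (A : ℕ → Fm2) : ℕ → ℕ → Fm2
  | 0 => fun i => (A i).reduce
  | k + 1 => fun i =>
      ((stage A k i).subst (fun j =>
        if stage A k j = Fm2.top then some true
        else if stage A k j = Fm2.bot then some false
        else none)).reduce

/-- τ(F) = 1 iff some iterate of F reduces to ⊤, or no iterate ever reduces
to ⊤ or ⊥ (τ(F) = 0 exactly when some iterate reduces to ⊥). -/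
def tauOne (e : Fm2 ≃ ℕ) (F : Fm2) : Prop :=
  (∃ k, stage (fun i => e.symm i) k (e F) = Fm2.top) ∨
  (∀ k, stage (fun i => e.symm i) k (e F) ≠ Fm2.top ∧
        stage (fun i => e.symm i) k (e F) ≠ Fm2.bot)

lemma Fm2.rimp_top_left (b : Fm2) : Fm2.rimp .top b = b := by cases b <;> rfl

lemma Fm2.rimp_bot_left (b : Fm2) : Fm2.rimp .bot b = .top := by
  cases b <;> rfl

lemma Fm2.rimp_top_right (a : Fm2) : Fm2.rimp a .top = .top := by
  cases a <;> rfl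

lemma Fm2.rimp_bot_right (a : Fm2) (h1 : a ≠ .top) (h2 : a ≠ .bot) :
    Fm2.rimp a .bot = .bot := by
  cases a <;> simp_all <;> rfl

lemma Fm2.rimp_ne (a b : Fm2) (ha1 : a ≠ .top) (ha2 : a ≠ .bot)
    (hb1 : b ≠ .top) (hb2 : b ≠ .bot) : Fm2.rimp a b = .imp a b := by
  cases a <;> cases b <;> simp_all <;> rfl

lemma stage_succ (A : ℕ → Fm2) (k i : ℕ) :
    stage A (k + 1) i = ((stage A k i).subst (fun j =>
      if stage A k j = Fm2.top then some true
      else if stage A k j = Fm2.bot then some false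
      else none)).reduce := rfl

lemma stage_top_succ (A : ℕ → Fm2) {k i : ℕ} (h : stage A k i = Fm2.top) :
    stage A (k + 1) i = Fm2.top := by
  rw [stage_succ, h]; rfl

lemma stage_bot_succ (A : ℕ → Fm2) {k i : ℕ} (h : stage A k i = Fm2.bot) :
    stage A (k + 1) i = Fm2.bot := by
  rw [stage_succ, h]; rfl

lemma stage_top_mono (A : ℕ → Fm2) {k i : ℕ} (h : stage A k i = Fm2.top) :
    ∀ m, k ≤ m → stage A m i = Fm2.top := by
  intro m hm
  induction m, hm using Nat.le_induction with
  | base => exact h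
  | succ n hn ih => exact stage_top_succ A ih

lemma stage_bot_mono (A : ℕ → Fm2) {k i : ℕ} (h : stage A k i = Fm2.bot) :
    ∀ m, k ≤ m → stage A m i = Fm2.bot := by
  intro m hm
  induction m, hm using Nat.le_induction with
  | base => exact h
  | succ n hn ih => exact stage_bot_succ A ih

/-- Key invariant: the iterates of `A → B` track `rimp` of the iterates of
`A` and `B`, except that once a iterate of `A → B` has collapsed to ⊥
(together with `B`) it stays ⊥. -/
lemma stage_imp_key (e : Fm2 ≃ ℕ) (A B : Fm2) (k : ℕ) :
    stage (fun i => e.symm i) k (e (A.imp B)) =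
      Fm2.rimp (stage (fun i => e.symm i) k (e A)) (stage (fun i => e.symm i) k (e B)) ∨
    (stage (fun i => e.symm i) k (e (A.imp B)) = Fm2.bot ∧
     stage (fun i => e.symm i) k (e B) = Fm2.bot) := by
  induction k with
  | zero =>
    left
    show (e.symm (e (A.imp B))).reduce = Fm2.rimp (e.symm (e A)).reduce (e.symm (e B)).reduce
    simp only [Equiv.symm_apply_apply]
    rfl
  | succ k ih =>
    set E := fun i => e.symm i with hE
    rcases ih with h | ⟨hC, hB⟩
    · by_cases hA1 : stage E k (e A) = Fm2.top
      · -- A_k = ⊤ : C_k = B_k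
        rw [hA1, Fm2.rimp_top_left] at h
        left
        rw [stage_top_mono E hA1 (k+1) (Nat.le_succ k), Fm2.rimp_top_left,
          stage_succ, stage_succ, h]
      · by_cases hA2 : stage E k (e A) = Fm2.bot
        · -- A_k = ⊥ : C_k = ⊤
          rw [hA2, Fm2.rimp_bot_left] at h
          left
          rw [stage_bot_mono E hA2 (k+1) (Nat.le_succ k), Fm2.rimp_bot_left,
            stage_top_succ E h]
        · by_cases hB1 : stage E k (e B) = Fm2.top
          · -- B_k = ⊤ : C_k = ⊤
            rw [hB1, Fm2.rimp_top_right] at h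
            left
            rw [stage_top_mono E hB1 (k+1) (Nat.le_succ k), Fm2.rimp_top_right,
              stage_top_succ E h]
          · by_cases hB2 : stage E k (e B) = Fm2.bot
            · -- B_k = ⊥ : C_k = ⊥
              rw [hB2, Fm2.rimp_bot_right _ hA1 hA2] at h
              right
              exact ⟨stage_bot_succ E h, stage_bot_mono E hB2 (k+1) (Nat.le_succ k)⟩
            · -- no collapse : C_k = imp A_k B_k
              rw [Fm2.rimp_ne _ _ hA1 hA2 hB1 hB2] at h
              left
              rw [stage_succ, h]
              rfl
    · right
      exact ⟨stage_bot_succ E hC, stage_bot_succ E hB⟩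

/-- closure under modus ponens: if τ(A) = 1 and τ(A → B) = 1
then τ(B) = 1. -/
theorem stmt15 (e : Fm2 ≃ ℕ) (A B : Fm2)
    (hA : tauOne e A) (hAB : tauOne e (A.imp B)) : tauOne e B := by
  by_contra hB
  unfold tauOne at hB
  push_neg at hB
  obtain ⟨hBtop, k0, hk0⟩ := hB
  have hBbot : stage (fun i => e.symm i) k0 (e B) = Fm2.bot := hk0 (hBtop k0)
  set E := fun i => e.symm i with hE
  -- find N with B_N = ⊥ and C_N = ⊥
  have hCbot : ∃ N, stage E N (e (A.imp B)) = Fm2.bot := by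
    rcases hA with ⟨m, hm⟩ | hnever
    · refine ⟨max m k0, ?_⟩
      have hAN : stage E (max m k0) (e A) = Fm2.top :=
        stage_top_mono E hm _ (le_max_left m k0)
      have hBN : stage E (max m k0) (e B) = Fm2.bot :=
        stage_bot_mono E hBbot _ (le_max_right m k0)
      rcases stage_imp_key e A B (max m k0) with h | ⟨h, _⟩
      · rw [hAN, hBN] at h; exact h
      · exact h
    · refine ⟨k0, ?_⟩
      obtain ⟨hA1, hA2⟩ := hnever k0
      rcases stage_imp_key e A B k0 with h | ⟨h, _⟩
      · rw [hBbot, Fm2.rimp_bot_right _ hA1 hA2] at h; exact h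
      · exact h
  obtain ⟨N, hN⟩ := hCbot
  rcases hAB with ⟨j, hj⟩ | hnever
  · have h1 : stage E (max j N) (e (A.imp B)) = Fm2.top :=
      stage_top_mono E hj _ (le_max_left j N)
    have h2 : stage E (max j N) (e (A.imp B)) = Fm2.bot :=
      stage_bot_mono E hN _ (le_max_right j N)
    rw [h1] at h2
    exact Fm2.noConfusion h2
  · exact (hnever N).2 hN
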